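/- For every alternating LTL formula γ, the equivalence F γ ≡ γ holds, i.e., for every alphabet Σ and every infinite word w ∈ Σ^ω, w ⊨ Fγ if and only if w ⊨ γ. -/
import Mathlib


/-- Syntax of LTL formulae over atomic propositions `AP`. -/
inductive LTL (AP : Type) : Type
  | tt    : LTL AP
  | atom  : AP → LTL AP
  | not   : LTL AP → LTL AP
  | or    : LTL AP → LTL AP → LTL AP
  | and   : LTL AP → LTL AP → LTL AP
  | next  : LTL AP → LTL AP
  | untl  : LTL AP → LTL AP → LTL AP

namespace LTL

/-- Derived operator `F` (eventually). -/
def F {AP : Type} (φ : LTL AP) : LTL AP := untl tt φ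

/-- Derived operator `G` (always). -/
def G {AP : Type} (φ : LTL AP) : LTL AP := not (F (not φ))

/-- Derived operator `R` (release). -/
def R {AP : Type} (φ ψ : LTL AP) : LTL AP := not (untl (not φ) (not ψ))

end LTL

/-- The `k`-th suffix of an infinite word. -/
def suffix {AP : Type} (w : ℕ → Set AP) (k : ℕ) : ℕ → Set AP :=
  fun i => w (i + k)

/-- Concatenation of a finite word `u` with an infinite word `w`. -/
def cat {AP : Type} (u : List (Set AP)) (w : ℕ → Set AP) : ℕ → Set AP :=
  fun i => if h : i < u.length then u.get ⟨i, h⟩ else w (i - u.length)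

/-- Satisfaction relation `w ⊨ φ` of LTL over infinite words `w : ℕ → Set AP`. -/
def Sat {AP : Type} : LTL AP → (ℕ → Set AP) → Prop
  | .tt, _ => True
  | .atom a, w => a ∈ w 0
  | .not φ, w => ¬ Sat φ w
  | .or φ ψ, w => Sat φ w ∨ Sat ψ w
  | .and φ ψ, w => Sat φ w ∧ Sat ψ w
  | .next φ, w => Sat φ (suffix w 1)
  | .untl φ ψ, w => ∃ i, Sat ψ (suffix w i) ∧ ∀ j < i, Sat φ (suffix w j)

/-- Pure eventuality formulae: μ ::= Fφ | μ∨μ | μ∧μ | Xμ | φUμ | μRμ | Gμ. -/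
inductive PureEventuality {AP : Type} : LTL AP → Prop
  | fin (φ : LTL AP) : PureEventuality (LTL.F φ)
  | or {μ₁ μ₂ : LTL AP} : PureEventuality μ₁ → PureEventuality μ₂ →
      PureEventuality (LTL.or μ₁ μ₂)
  | and {μ₁ μ₂ : LTL AP} : PureEventuality μ₁ → PureEventuality μ₂ →
      PureEventuality (LTL.and μ₁ μ₂)
  | next {μ : LTL AP} : PureEventuality μ → PureEventuality (LTL.next μ)
  | untl (φ : LTL AP) {μ : LTL AP} : PureEventuality μ →
      PureEventuality (LTL.untl φ μ)
  | rel {μ₁ μ₂ : LTL AP} : PureEventuality μ₁ → PureEventuality μ₂ →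
      PureEventuality (LTL.R μ₁ μ₂)
  | glob {μ : LTL AP} : PureEventuality μ → PureEventuality (LTL.G μ)

/-- Pure universality formulae: ν ::= Gφ | ν∨ν | ν∧ν | Xν | νUν | φRν | Fν. -/
inductive PureUniversality {AP : Type} : LTL AP → Prop
  | glob (φ : LTL AP) : PureUniversality (LTL.G φ)
  | or {ν₁ ν₂ : LTL AP} : PureUniversality ν₁ → PureUniversality ν₂ →
      PureUniversality (LTL.or ν₁ ν₂)
  | and {ν₁ ν₂ : LTL AP} : PureUniversality ν₁ → PureUniversality ν₂ →
      PureUniversality (LTL.and ν₁ ν₂)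
  | next {ν : LTL AP} : PureUniversality ν → PureUniversality (LTL.next ν)
  | untl {ν₁ ν₂ : LTL AP} : PureUniversality ν₁ → PureUniversality ν₂ →
      PureUniversality (LTL.untl ν₁ ν₂)
  | rel (φ : LTL AP) {ν : LTL AP} : PureUniversality ν →
      PureUniversality (LTL.R φ ν)
  | fin {ν : LTL AP} : PureUniversality ν → PureUniversality (LTL.F ν)

/-- Alternating formulae: ξ ::= Gμ | Fν | ξ∨ξ | ξ∧ξ | Xξ | φUξ | φRξ | Fξ | Gξ. -/
inductive Alternating {AP : Type} : LTL AP → Prop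
  | globEv {μ : LTL AP} : PureEventuality μ → Alternating (LTL.G μ)
  | finUniv {ν : LTL AP} : PureUniversality ν → Alternating (LTL.F ν)
  | or {ξ₁ ξ₂ : LTL AP} : Alternating ξ₁ → Alternating ξ₂ →
      Alternating (LTL.or ξ₁ ξ₂)
  | and {ξ₁ ξ₂ : LTL AP} : Alternating ξ₁ → Alternating ξ₂ →
      Alternating (LTL.and ξ₁ ξ₂)
  | next {ξ : LTL AP} : Alternating ξ → Alternating (LTL.next ξ)
  | untl (φ : LTL AP) {ξ : LTL AP} : Alternating ξ → Alternating (LTL.untl φ ξ)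
  | rel (φ : LTL AP) {ξ : LTL AP} : Alternating ξ → Alternating (LTL.R φ ξ)
  | fin {ξ : LTL AP} : Alternating ξ → Alternating (LTL.F ξ)
  | glob {ξ : LTL AP} : Alternating ξ → Alternating (LTL.G ξ)

theorem suffix_suffix {AP : Type} (w : ℕ → Set AP) (i j : ℕ) :
    suffix (suffix w i) j = suffix w (j + i) := by
  funext x; simp [suffix, Nat.add_assoc]

theorem suffix_zero {AP : Type} (w : ℕ → Set AP) : suffix w 0 = w := by
  funext x; simp [suffix]

theorem Sat_F {AP : Type} (φ : LTL AP) (w : ℕ → Set AP) :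
    Sat (LTL.F φ) w ↔ ∃ i, Sat φ (suffix w i) := by
  simp [LTL.F, Sat]

theorem Sat_G {AP : Type} (φ : LTL AP) (w : ℕ → Set AP) :
    Sat (LTL.G φ) w ↔ ∀ i, Sat φ (suffix w i) := by
  simp [LTL.G, LTL.F, Sat]

theorem Sat_R {AP : Type} (φ ψ : LTL AP) (w : ℕ → Set AP) :
    Sat (LTL.R φ ψ) w ↔ ∀ j, Sat ψ (suffix w j) ∨ ∃ k < j, Sat φ (suffix w k) := by
  simp only [LTL.R, Sat]
  push_neg
  exact forall_congr' fun j => (or_iff_not_imp_left).symm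

/-- Pure eventuality formulae propagate from suffixes back to the word. -/
theorem PE_back {AP : Type} {μ : LTL AP} (h : PureEventuality μ) :
    ∀ (w : ℕ → Set AP) (i : ℕ), Sat μ (suffix w i) → Sat μ w := by
  induction h with
  | fin φ =>
    intro w i hs
    rw [Sat_F] at hs ⊢
    obtain ⟨j, hj⟩ := hs
    rw [suffix_suffix] at hj
    exact ⟨j + i, hj⟩
  | or h1 h2 ih1 ih2 =>
    intro w i hs
    rcases hs with hs | hs
    · exact Or.inl (ih1 w i hs)
    · exact Or.inr (ih2 w i hs)
  | and h1 h2 ih1 ih2 =>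
    intro w i hs
    exact ⟨ih1 w i hs.1, ih2 w i hs.2⟩
  | next h ih =>
    intro w i hs
    simp only [Sat] at hs ⊢
    rw [suffix_suffix] at hs
    have : suffix w (1 + i) = suffix (suffix w 1) i := by
      rw [suffix_suffix, Nat.add_comm]
    rw [this] at hs
    exact ih _ i hs
  | untl φ h ih =>
    intro w i hs
    obtain ⟨j, hj, _⟩ := hs
    rw [suffix_suffix] at hj
    have := ih w (j + i) hj
    exact ⟨0, by rwa [suffix_zero], fun k hk => absurd hk (Nat.not_lt_zero k)⟩
  | rel h1 h2 ih1 ih2 =>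
    intro w i hs
    rw [Sat_R] at hs ⊢
    intro j
    by_cases hji : j ≤ i
    · left
      have h0 := hs 0
      simp only [Nat.not_lt_zero] at h0
      rcases h0 with h0 | ⟨k, hk, _⟩
      · rw [suffix_suffix, Nat.zero_add] at h0
        have : suffix w i = suffix (suffix w j) (i - j) := by
          rw [suffix_suffix, Nat.sub_add_cancel hji]
        rw [this] at h0
        exact ih2 _ _ h0
      · exact hk.elim
    · push_neg at hji
      rcases hs (j - i) with h0 | ⟨k, hk, hφ⟩
      · left
        rwa [suffix_suffix, Nat.sub_add_cancel hji.le] at h0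
      · right
        refine ⟨k + i, ?_, by rwa [suffix_suffix] at hφ⟩
        omega
  | glob h ih =>
    intro w i hs
    rw [Sat_G] at hs ⊢
    intro j
    by_cases hji : j ≤ i
    · have h0 := hs 0
      rw [suffix_suffix, Nat.zero_add] at h0
      have : suffix w i = suffix (suffix w j) (i - j) := by
        rw [suffix_suffix, Nat.sub_add_cancel hji]
      rw [this] at h0
      exact ih _ _ h0
    · push_neg at hji
      have h0 := hs (j - i)
      rwa [suffix_suffix, Nat.sub_add_cancel hji.le] at h0

/-- Pure universality formulae propagate from the word to all suffixes. -/
theorem PU_fwd {AP : Type} {ν : LTL AP} (h : PureUniversality ν) :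
    ∀ (w : ℕ → Set AP) (i : ℕ), Sat ν w → Sat ν (suffix w i) := by
  induction h with
  | glob φ =>
    intro w i hs
    rw [Sat_G] at hs ⊢
    intro j
    rw [suffix_suffix]
    exact hs (j + i)
  | or h1 h2 ih1 ih2 =>
    intro w i hs
    rcases hs with hs | hs
    · exact Or.inl (ih1 w i hs)
    · exact Or.inr (ih2 w i hs)
  | and h1 h2 ih1 ih2 =>
    intro w i hs
    exact ⟨ih1 w i hs.1, ih2 w i hs.2⟩
  | next h ih =>
    intro w i hs
    simp only [Sat] at hs ⊢
    rw [suffix_suffix]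
    have : suffix w (1 + i) = suffix (suffix w 1) i := by
      rw [suffix_suffix, Nat.add_comm]
    rw [this]
    exact ih _ i hs
  | untl h1 h2 ih1 ih2 =>
    intro w i hs
    obtain ⟨j, hj, hbefore⟩ := hs
    by_cases hji : j ≤ i
    · refine ⟨0, ?_, fun k hk => absurd hk (Nat.not_lt_zero k)⟩
      rw [suffix_suffix, Nat.zero_add]
      have : suffix w i = suffix (suffix w j) (i - j) := by
        rw [suffix_suffix, Nat.sub_add_cancel hji]
      rw [this]
      exact ih2 _ _ hj
    · push_neg at hji
      refine ⟨j - i, ?_, fun k hk => ?_⟩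
      · rwa [suffix_suffix, Nat.sub_add_cancel hji.le]
      · rw [suffix_suffix]
        exact hbefore (k + i) (by omega)
  | rel φ h ih =>
    intro w i hs
    rw [Sat_R] at hs ⊢
    intro j
    left
    have h0 := hs 0
    simp only [Nat.not_lt_zero] at h0
    rcases h0 with h0 | ⟨k, hk, _⟩
    · rw [suffix_zero] at h0
      rw [suffix_suffix]
      exact ih _ _ h0
    · exact hk.elim
  | fin h ih =>
    intro w i hs
    rw [Sat_F] at hs ⊢
    obtain ⟨j, hj⟩ := hs
    by_cases hji : j ≤ i
    · refine ⟨0, ?_⟩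
      rw [suffix_suffix, Nat.zero_add]
      have : suffix w i = suffix (suffix w j) (i - j) := by
        rw [suffix_suffix, Nat.sub_add_cancel hji]
      rw [this]
      exact ih _ _ hj
    · push_neg at hji
      refine ⟨j - i, ?_⟩
      rwa [suffix_suffix, Nat.sub_add_cancel hji.le]

/-- Alternating formulae are shift-invariant. -/
theorem Alt_shift {AP : Type} {ξ : LTL AP} (h : Alternating ξ) :
    ∀ (w : ℕ → Set AP) (i : ℕ), Sat ξ (suffix w i) ↔ Sat ξ w := by
  induction h with
  | globEv hμ =>
    intro w i
    constructor
    · exact PE_back (PureEventuality.glob hμ) w i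
    · intro hs
      rw [Sat_G] at hs ⊢
      intro j
      rw [suffix_suffix]
      exact hs (j + i)
  | finUniv hν =>
    intro w i
    constructor
    · intro hs
      rw [Sat_F] at hs ⊢
      obtain ⟨j, hj⟩ := hs
      rw [suffix_suffix] at hj
      exact ⟨j + i, hj⟩
    · exact PU_fwd (PureUniversality.fin hν) w i
  | or h1 h2 ih1 ih2 =>
    intro w i
    exact or_congr (ih1 w i) (ih2 w i)
  | and h1 h2 ih1 ih2 =>
    intro w i
    exact and_congr (ih1 w i) (ih2 w i)
  | next h ih =>
    intro w i
    simp only [Sat]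
    rw [suffix_suffix]
    have : suffix w (1 + i) = suffix (suffix w 1) i := by
      rw [suffix_suffix, Nat.add_comm]
    rw [this, ih (suffix w 1) i]
  | untl φ h ih =>
    intro w i
    constructor
    · intro ⟨j, hj, _⟩
      rw [suffix_suffix] at hj
      rw [ih w (j + i)] at hj
      exact ⟨0, by rwa [suffix_zero], fun k hk => absurd hk (Nat.not_lt_zero k)⟩
    · intro ⟨j, hj, _⟩
      rw [ih w j] at hj
      refine ⟨0, ?_, fun k hk => absurd hk (Nat.not_lt_zero k)⟩
      rw [suffix_suffix, Nat.zero_add, ih w i]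
      exact hj
  | rel φ h ih =>
    intro w i
    rw [Sat_R, Sat_R]
    constructor
    · intro hs j
      left
      have h0 := hs 0
      simp only [Nat.not_lt_zero] at h0
      rcases h0 with h0 | ⟨k, hk, _⟩
      · rw [suffix_suffix, Nat.zero_add, ih w i] at h0
        rw [ih w j]
        exact h0
      · exact hk.elim
    · intro hs j
      left
      have h0 := hs 0
      simp only [Nat.not_lt_zero] at h0
      rcases h0 with h0 | ⟨k, hk, _⟩
      · rw [suffix_zero] at h0
        rw [suffix_suffix, ih w (j + i)]
        exact h0
      · exact hk.elim
  | fin h ih =>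
    intro w i
    rw [Sat_F, Sat_F]
    constructor
    · intro ⟨j, hj⟩
      rw [suffix_suffix, ih w (j + i)] at hj
      exact ⟨0, by rwa [suffix_zero]⟩
    · intro ⟨j, hj⟩
      rw [ih w j] at hj
      refine ⟨0, ?_⟩
      rw [suffix_suffix, Nat.zero_add, ih w i]
      exact hj
  | glob h ih =>
    intro w i
    rw [Sat_G, Sat_G]
    constructor
    · intro hs j
      have h0 := hs 0
      rw [suffix_suffix, Nat.zero_add, ih w i] at h0
      rw [ih w j]
      exact h0
    · intro hs j
      rw [suffix_suffix, ih w (j + i)]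
      have := hs 0
      rw [suffix_zero] at this
      exact this

theorem eventually_alternating_equiv :
    ∀ (AP : Type) (γ : LTL AP), Alternating γ →
      ∀ (w : ℕ → Set AP), Sat (LTL.F γ) w ↔ Sat γ w := by
  intro AP γ hγ w
  rw [Sat_F]
  constructor
  · intro ⟨i, hi⟩
    exact (Alt_shift hγ w i).mp hi
  · intro hs
    exact ⟨0, by rwa [suffix_zero]⟩
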